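/- Let Ω ⊆ ℝ³ be a bounded open set, let (μ, λ, C) be a smooth orthogonal coordinate system on Ω, let F : ℝ → ℝ be smooth, let c ∈ ℝ, and let P : Ω → ℝ be smooth. Assume that at every point of Ω: (1/2)·|∇C|² = F′(λ²) and (1/2)·|∇μ|² = −P + F(λ²) − λ²·F′(λ²) + c. Then the vector field w = ∇μ + λ·∇C satisfies w × curl w = ∇(P + (1/2)·|w|²) on Ω, and w·∇λ = 0 on Ω (λ is an invariant of the flow generated by w). -/

import Mathlib

noncomputable section

/-- Points of `ℝ³`. -/
abbrev V3 : Type := Fin 3 → ℝ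

/-- Standard basis vector. -/
def ee (i : Fin 3) : V3 := fun j => if j = i then 1 else 0

/-- Partial derivative in the `i`-th coordinate direction. -/
def pd (i : Fin 3) (f : V3 → ℝ) (x : V3) : ℝ := fderiv ℝ f x (ee i)

/-- Gradient of a scalar field. -/
def grad (f : V3 → ℝ) (x : V3) : V3 := fun i => pd i f x

/-- Divergence of a vector field. -/
def vdiv (w : V3 → V3) (x : V3) : ℝ :=
  pd 0 (fun y => w y 0) x + pd 1 (fun y => w y 1) x + pd 2 (fun y => w y 2) x

/-- Curl of a vector field. -/
def vcurl (w : V3 → V3) (x : V3) : V3 :=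
  ![pd 1 (fun y => w y 2) x - pd 2 (fun y => w y 1) x,
    pd 2 (fun y => w y 0) x - pd 0 (fun y => w y 2) x,
    pd 0 (fun y => w y 1) x - pd 1 (fun y => w y 0) x]

/-- Euclidean dot product on `ℝ³`. -/
def dot3 (a b : V3) : ℝ := a 0 * b 0 + a 1 * b 1 + a 2 * b 2

/-- Cross product on `ℝ³`. -/
def cross3 (a b : V3) : V3 :=
  ![a 1 * b 2 - a 2 * b 1, a 2 * b 0 - a 0 * b 2, a 0 * b 1 - a 1 * b 0]

/-- Euclidean norm on `ℝ³`. -/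
def norm3 (a : V3) : ℝ := Real.sqrt (dot3 a a)

/-- Laplacian of a scalar field. -/
def lap (f : V3 → ℝ) (x : V3) : ℝ := vdiv (grad f) x

/-- A smooth orthogonal coordinate system on `Ω`: three smooth scalar functions whose
gradients are nonvanishing and pairwise orthogonal at every point of `Ω`. -/
def OrthoSystem (Ω : Set V3) (f g h : V3 → ℝ) : Prop :=
  ContDiffOn ℝ (⊤ : ℕ∞) f Ω ∧ ContDiffOn ℝ (⊤ : ℕ∞) g Ω ∧ ContDiffOn ℝ (⊤ : ℕ∞) h Ω ∧
    ∀ x ∈ Ω, grad f x ≠ 0 ∧ grad g x ≠ 0 ∧ grad h x ≠ 0 ∧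
      dot3 (grad f x) (grad g x) = 0 ∧ dot3 (grad f x) (grad h x) = 0 ∧
      dot3 (grad g x) (grad h x) = 0

open Topology

lemma pd_congr {f g : V3 → ℝ} {x : V3} (h : f =ᶠ[nhds x] g) (i : Fin 3) :
    pd i f x = pd i g x := by
  unfold pd; rw [Filter.EventuallyEq.fderiv_eq h]

lemma pd_diff {f : V3 → ℝ} {x : V3} (hf : ContDiffAt ℝ (⊤ : ℕ∞) f x) (j : Fin 3) :
    DifferentiableAt ℝ (pd j f) x := by
  have hdf : DifferentiableAt ℝ (fderiv ℝ f) x :=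
    (hf.fderiv_right (m := 1) (WithTop.coe_le_coe.mpr le_top)).differentiableAt one_ne_zero
  exact ((ContinuousLinearMap.apply ℝ ℝ (ee j)).differentiableAt).comp x hdf

lemma pd_pd_eq {f : V3 → ℝ} {x : V3} (hf : ContDiffAt ℝ (⊤ : ℕ∞) f x) (i j : Fin 3) :
    pd i (pd j f) x = fderiv ℝ (fderiv ℝ f) x (ee i) (ee j) := by
  have hdf : DifferentiableAt ℝ (fderiv ℝ f) x :=
    (hf.fderiv_right (m := 1) (WithTop.coe_le_coe.mpr le_top)).differentiableAt one_ne_zero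
  have h : HasFDerivAt (pd j f)
      ((ContinuousLinearMap.apply ℝ ℝ (ee j)).comp (fderiv ℝ (fderiv ℝ f) x)) x :=
    ((ContinuousLinearMap.apply ℝ ℝ (ee j)).hasFDerivAt).comp x hdf.hasFDerivAt
  show fderiv ℝ (pd j f) x (ee i) = _
  rw [h.fderiv]; rfl

lemma pd_symm {f : V3 → ℝ} {x : V3} (hf : ContDiffAt ℝ (⊤ : ℕ∞) f x) (i j : Fin 3) :
    pd i (pd j f) x = pd j (pd i f) x := by
  rw [pd_pd_eq hf, pd_pd_eq hf]
  exact hf.isSymmSndFDerivAt (by rw [minSmoothness_of_isRCLikeNormedField]; exact WithTop.coe_le_coe.mpr le_top) (ee i) (ee j)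

lemma pd_add {a b : V3 → ℝ} {x : V3} (ha : DifferentiableAt ℝ a x)
    (hb : DifferentiableAt ℝ b x) (i : Fin 3) :
    pd i (fun y => a y + b y) x = pd i a x + pd i b x := by
  unfold pd; rw [fderiv_fun_add ha hb]; rfl

lemma pd_mul {a b : V3 → ℝ} {x : V3} (ha : DifferentiableAt ℝ a x)
    (hb : DifferentiableAt ℝ b x) (i : Fin 3) :
    pd i (fun y => a y * b y) x = pd i a x * b x + a x * pd i b x := by
  unfold pd; rw [fderiv_fun_mul ha hb]; simp; ring

lemma pd_F_sq {F : ℝ → ℝ} (hF : ContDiff ℝ (⊤ : ℕ∞) F) {lam : V3 → ℝ} {x : V3}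
    (hlam : DifferentiableAt ℝ lam x) (c : ℝ) (i : Fin 3) :
    pd i (fun y => F (lam y ^ 2) + c) x
      = deriv F (lam x ^ 2) * (2 * lam x * pd i lam x) := by
  have h1 : HasFDerivAt (fun y => lam y ^ 2) ((2 * lam x) • fderiv ℝ lam x) x := by
    rw [show (fun y => lam y ^ 2) = fun y => lam y * lam y from funext fun y => sq _]
    refine (hlam.hasFDerivAt.fun_mul hlam.hasFDerivAt).congr_fderiv ?_
    rw [two_mul, add_smul]
  have hFd : HasDerivAt F (deriv F (lam x ^ 2)) (lam x ^ 2) :=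
    ((hF.differentiable (by simp)) (lam x ^ 2)).hasDerivAt
  have h2 : HasFDerivAt (fun y => F (lam y ^ 2) + c)
      (deriv F (lam x ^ 2) • ((2 * lam x) • fderiv ℝ lam x)) x :=
    ((hFd.comp_hasFDerivAt x h1)).add_const c
  show fderiv ℝ _ x (ee i) = _
  rw [h2.fderiv]
  simp [pd, ContinuousLinearMap.smul_apply]

/-- If `(μ, λ, C)` is an orthogonal coordinate system with
`(1/2)|∇C|² = F'(λ²)` and `(1/2)|∇μ|² = −P + F(λ²) − λ²F'(λ²) + c`, then
`w = ∇μ + λ·∇C` solves `w × curl w = ∇(P + (1/2)|w|²)` and `w·∇λ = 0` on `Ω`. -/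
theorem stmt18 (Ω : Set V3) (hΩ : IsOpen Ω) (hb : Bornology.IsBounded Ω)
    (μ lam C : V3 → ℝ) (hortho : OrthoSystem Ω μ lam C)
    (F : ℝ → ℝ) (hF : ContDiff ℝ (⊤ : ℕ∞) F) (c : ℝ)
    (P : V3 → ℝ) (hP : ContDiffOn ℝ (⊤ : ℕ∞) P Ω)
    (hC : ∀ x ∈ Ω, (1 / 2 : ℝ) * dot3 (grad C x) (grad C x) = deriv F (lam x ^ 2))
    (hμ : ∀ x ∈ Ω, (1 / 2 : ℝ) * dot3 (grad μ x) (grad μ x) =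
      -P x + F (lam x ^ 2) - lam x ^ 2 * deriv F (lam x ^ 2) + c)
    (w : V3 → V3) (hw : w = fun x => grad μ x + lam x • grad C x) :
    ∀ x ∈ Ω,
      cross3 (w x) (vcurl w x) =
        grad (fun y => P y + (1 / 2 : ℝ) * dot3 (w y) (w y)) x ∧
      dot3 (w x) (grad lam x) = 0 := by
  obtain ⟨hμs, hlams, hCs, horth⟩ := hortho
  intro x hx
  have hxn : Ω ∈ nhds x := hΩ.mem_nhds hx
  have hμx : ContDiffAt ℝ (⊤ : ℕ∞) μ x := hμs.contDiffAt hxn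
  have hlamx : ContDiffAt ℝ (⊤ : ℕ∞) lam x := hlams.contDiffAt hxn
  have hCx : ContDiffAt ℝ (⊤ : ℕ∞) C x := hCs.contDiffAt hxn
  have hlamd : DifferentiableAt ℝ lam x := hlamx.differentiableAt (by simp)
  obtain ⟨-, -, -, s1, s2, s3⟩ := horth x hx
  simp only [dot3] at s1 s2 s3
  have hCeq := hC x hx
  simp only [dot3] at hCeq
  -- the invariant part
  have hinv : dot3 (w x) (grad lam x) = 0 := by
    simp only [hw, dot3, Pi.add_apply, Pi.smul_apply, smul_eq_mul]
    linear_combination s1 + lam x * s3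
  refine ⟨?_, hinv⟩
  -- RHS rewritten via the Bernoulli-type identity
  have heq : (fun y => P y + (1 / 2 : ℝ) * dot3 (w y) (w y))
      =ᶠ[nhds x] (fun y => F (lam y ^ 2) + c) := by
    filter_upwards [hxn] with y hy
    obtain ⟨-, -, -, t1, t2, t3⟩ := horth y hy
    have h1 := hμ y hy
    have h2 := hC y hy
    simp only [hw, dot3, Pi.add_apply, Pi.smul_apply, smul_eq_mul] at t1 t2 t3 h1 h2 ⊢
    linear_combination h1 + lam y ^ 2 * h2 + lam y * t2
  have hRHS : ∀ i, grad (fun y => P y + (1 / 2 : ℝ) * dot3 (w y) (w y)) x i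
      = deriv F (lam x ^ 2) * (2 * lam x * pd i lam x) := fun i => by
    show pd i _ x = _
    rw [pd_congr heq i, pd_F_sq hF hlamd c i]
  -- derivatives of components of w
  have hwj : ∀ j : Fin 3, (fun y => w y j) = fun y => pd j μ y + lam y * pd j C y := by
    intro j; funext y; rw [hw]; simp [grad, Pi.add_apply, Pi.smul_apply, smul_eq_mul]
  have hpd : ∀ i j : Fin 3, pd i (fun y => w y j) x
      = pd i (pd j μ) x + (pd i lam x * pd j C x + lam x * pd i (pd j C) x) := by
    intro i j
    rw [hwj j, pd_add (pd_diff hμx j) (hlamd.fun_mul (pd_diff hCx j)) i,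
      pd_mul hlamd (pd_diff hCx j) i]
  -- curl components
  have hcurl : ∀ i j : Fin 3,
      pd i (fun y => w y j) x - pd j (fun y => w y i) x
        = pd i lam x * pd j C x - pd j lam x * pd i C x := by
    intro i j
    rw [hpd i j, hpd j i, pd_symm hμx i j, pd_symm hCx i j]
    ring
  have hwc : ∀ j : Fin 3, w x j = pd j μ x + lam x * pd j C x := by
    intro j; rw [hw]; simp [grad, Pi.add_apply, Pi.smul_apply, smul_eq_mul]
  simp only [grad] at s1 s2 s3 hCeq
  have h0 : cross3 (w x) (vcurl w x) 0
      = grad (fun y => P y + (1 / 2 : ℝ) * dot3 (w y) (w y)) x 0 := by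
    rw [hRHS 0]
    simp only [cross3, vcurl, Matrix.cons_val_zero, Matrix.cons_val_one, Matrix.head_cons,
      Matrix.cons_val_two, Matrix.tail_cons]
    rw [hwc 1, hwc 2, hcurl 0 1, hcurl 2 0]
    linear_combination (pd 0 lam x) * s2 + 2 * lam x * (pd 0 lam x) * hCeq
      - (pd 0 C x) * s1 - lam x * (pd 0 C x) * s3
  have h1 : cross3 (w x) (vcurl w x) 1
      = grad (fun y => P y + (1 / 2 : ℝ) * dot3 (w y) (w y)) x 1 := by
    rw [hRHS 1]
    simp only [cross3, vcurl, Matrix.cons_val_zero, Matrix.cons_val_one, Matrix.head_cons,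
      Matrix.cons_val_two, Matrix.tail_cons]
    rw [hwc 0, hwc 2, hcurl 1 2, hcurl 0 1]
    linear_combination (pd 1 lam x) * s2 + 2 * lam x * (pd 1 lam x) * hCeq
      - (pd 1 C x) * s1 - lam x * (pd 1 C x) * s3
  have h2 : cross3 (w x) (vcurl w x) 2
      = grad (fun y => P y + (1 / 2 : ℝ) * dot3 (w y) (w y)) x 2 := by
    rw [hRHS 2]
    simp only [cross3, vcurl, Matrix.cons_val_zero, Matrix.cons_val_one, Matrix.head_cons,
      Matrix.cons_val_two, Matrix.tail_cons]
    rw [hwc 0, hwc 1, hcurl 2 0, hcurl 1 2]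
    linear_combination (pd 2 lam x) * s2 + 2 * lam x * (pd 2 lam x) * hCeq
      - (pd 2 C x) * s1 - lam x * (pd 2 C x) * s3
  funext i
  fin_cases i
  · exact h0
  · exact h1
  · exact h2
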